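/- For every k ∈ ℕ and every finite subset G_n ⊆ G, |Tr((W_{G_n})^k) − Σ_{i∈G_n} (W^k)(i,i)| ≤ δ_n·(k−1)·2^{k−1}, where W_{G_n} denotes the G_n × G_n matrix (W(i,j))_{i,j∈G_n} and (W^k)(i,i) is the (i,i) entry of the k-th power of the infinite kernel W. Consequently, if δ_n/m_n → 0 then (1/m_n)(Tr((W_{G_n})^k) − Σ_{i∈G_n}(W^k)(i,i)) → 0 for every k, so the empirical distribution of eigenvalues of W_{G_n} converges weakly to a measure μ if and only if the moment condition (1/m_n) Σ_{i∈G_n} (W^k)(i,i) → ∫ λ^k dμ(λ) holds for every k. -/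

import Mathlib

/-! Let `A` be the restriction of `W` to `G_n` and `E_k` the restriction of `W^k` minus `A^k`.
Then `E_{k+1} = A E_k + (W^{k+1} - A W^k)|_{G_n}`, and the correction term only sees paths that
leave `G_n` at their first step: its rows vanish off the boundary and have `ℓ¹`-norm at most `1`
on it. The columns of `A` have `ℓ¹`-norm at most `1` (by symmetry), so multiplication by `A` does
not increase the entrywise `ℓ¹` norm. Hence that norm of `E_k` grows by at most `δ_n` per step,
which gives `|Tr A^k - Σ_i W^k(i,i)| = |Tr E_k| ≤ δ_n (k - 1)`; the limits follow after dividing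
by `m_n`. -/

open scoped BigOperators Classical
open MeasureTheory Filter ProbabilityTheory

noncomputable section

variable {G : Type*}

/-- Entrywise powers of the kernel `W`. -/
def Wpow (W : G → G → ℝ) : ℕ → G → G → ℝ
  | 0 => fun i j => if i = j then (1 : ℝ) else 0
  | (h + 1) => fun i j => ∑' k, W i k * Wpow W h k j

/-- The infinite matrix `K(f)` associated to a power series `f`. -/
def Kmat (W : G → G → ℝ) (f : ℕ → ℝ) (i j : G) : ℝ :=
  ∑' h, f h * Wpow W h i j

/-- The finite matrix `K_n(f)`, the restriction of `K(f)` to a finite subset. -/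
def Kn (W : G → G → ℝ) (f : ℕ → ℝ) (Gn : Finset G) : Matrix Gn Gn ℝ :=
  Matrix.of fun i j => Kmat W f (i : G) (j : G)

/-- The regularity factor `α(f) = Σ_h |f_h| (h+1)`. -/
def regFactor (f : ℕ → ℝ) : ℝ := ∑' h, |f h| * (h + 1 : ℝ)

/-- `‖f‖_{1,pol} = Σ_h |f_h|`. -/
def polNorm (f : ℕ → ℝ) : ℝ := ∑' h, |f h|

/-- Cauchy product of power series. -/
def cauchy (f g : ℕ → ℝ) (h : ℕ) : ℝ :=
  ∑ k ∈ Finset.range (h + 1), f k * g (h - k)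

/-- The unit power series (`1`). -/
def cauchyOne : ℕ → ℝ := fun h => if h = 0 then 1 else 0

/-- `k`-th Cauchy power of a power series. -/
def cauchyPow (g : ℕ → ℝ) : ℕ → ℕ → ℝ
  | 0 => cauchyOne
  | (k + 1) => cauchy g (cauchyPow g k)

/-- `δ_n`: the cardinality of the boundary of `G_n`. -/
def boundary (W : G → G → ℝ) (Gn : Finset G) : ℕ :=
  ({i | i ∈ Gn ∧ ∃ j, j ∉ Gn ∧ W i j ≠ 0} : Set G).ncard

/-- The block norm `b_n(B) = (1/δ_n) Σ_{i,j} |B(i,j)|`. -/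
def blockNorm (W : G → G → ℝ) (Gn : Finset G) (B : Matrix Gn Gn ℝ) : ℝ :=
  (1 / (boundary W Gn : ℝ)) * ∑ i, ∑ j, |B i j|

/-- Evaluation of a power series at a point. -/
def fEval (f : ℕ → ℝ) (x : ℝ) : ℝ := ∑' h, f h * x ^ h

/-- The class `F_ρ`: positive on `[-1,1]`, with `log f` admitting a power series
expansion on `[-1,1]` whose regularity factor is at most `ρ`. -/
def memF (ρ : ℝ) (f : ℕ → ℝ) : Prop :=
  Summable (fun h => |f h|) ∧
  (∀ x ∈ Set.Icc (-1 : ℝ) 1, 0 < fEval f x) ∧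
  ∃ g : ℕ → ℝ, Summable (fun h => |g h| * (h + 1 : ℝ)) ∧ regFactor g ≤ ρ ∧
    ∀ x ∈ Set.Icc (-1 : ℝ) 1, Real.log (fEval f x) = fEval g x

/-- The standing hypotheses on the kernel `W`: symmetry, degree bounded by `D`,
and entries bounded by `1/D`. -/
def KernelHyp (W : G → G → ℝ) (D : ℕ) : Prop :=
  (∀ i j, W i j = W j i) ∧
  (∀ i, ({j | W i j ≠ 0} : Set G).Finite) ∧
  (∀ i, ({j | W i j ≠ 0} : Set G).ncard ≤ D) ∧
  (∀ i j, |W i j| ≤ 1 / (D : ℝ))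

section Kernel

variable {W : G → G → ℝ}

theorem KernelHyp.sum_abs_le_one {D : ℕ} (hW : KernelHyp W D) (i : G) (T : Finset G) :
    ∑ j ∈ T, |W i j| ≤ 1 := by
  obtain ⟨-, hfin, hcard, hbnd⟩ := hW
  set F := (hfin i).toFinset
  have hcardF : (F.card : ℝ) ≤ D := by
    have := hcard i
    rw [Set.ncard_eq_toFinset_card _ (hfin i)] at this
    exact_mod_cast this
  calc ∑ j ∈ T, |W i j| ≤ ∑ j ∈ F, |W i j| := by
        rw [← Finset.sum_filter_ne_zero]
        refine Finset.sum_le_sum_of_subset_of_nonneg (fun j hj => ?_) fun _ _ _ => abs_nonneg _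
        simpa [F] using (Finset.mem_filter.1 hj).2
    _ ≤ F.card * (1 / (D : ℝ)) := by
        simpa using Finset.sum_le_card_nsmul F _ _ fun j _ => hbnd i j
    _ ≤ 1 := by
        rcases Nat.eq_zero_or_pos D with rfl | hD
        · simp
        · rw [mul_one_div, div_le_one (by exact_mod_cast hD)]
          exact hcardF

theorem Wpow_succ_eq_sum {i : G} {F : Finset G} (hF : ∀ l ∉ F, W i l = 0) (k : ℕ) (j : G) :
    Wpow W (k + 1) i j = ∑ l ∈ F, W i l * Wpow W k l j :=
  tsum_eq_sum fun l hl => by simp [hF l hl]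

theorem Wpow_one : Wpow W 1 = W := by
  ext i j
  change ∑' l, W i l * (if l = j then (1 : ℝ) else 0) = W i j
  simp

theorem sum_abs_sum_mul_le {P : G → G → ℝ} (hP : ∀ l (T : Finset G), ∑ j ∈ T, |P l j| ≤ 1)
    (c : G → ℝ) (F T : Finset G) :
    ∑ j ∈ T, |∑ l ∈ F, c l * P l j| ≤ ∑ l ∈ F, |c l| :=
  calc ∑ j ∈ T, |∑ l ∈ F, c l * P l j| ≤ ∑ j ∈ T, ∑ l ∈ F, |c l| * |P l j| := by
        gcongr with j _
        exact (Finset.abs_sum_le_sum_abs _ _).trans_eq (by simp only [abs_mul])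
    _ = ∑ l ∈ F, |c l| * ∑ j ∈ T, |P l j| := by
        rw [Finset.sum_comm]; simp only [Finset.mul_sum]
    _ ≤ ∑ l ∈ F, |c l| * 1 := by gcongr with l _; exact hP l T
    _ = ∑ l ∈ F, |c l| := by simp only [mul_one]

variable (hfin : ∀ i, (Function.support (W i)).Finite)
  (hrow : ∀ i (T : Finset G), ∑ j ∈ T, |W i j| ≤ 1)
include hfin hrow

theorem sum_abs_Wpow_le_one (k : ℕ) (i : G) (T : Finset G) :
    ∑ j ∈ T, |Wpow W k i j| ≤ 1 := by
  induction k generalizing i T with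
  | zero =>
    change ∑ j ∈ T, |if i = j then (1 : ℝ) else 0| ≤ 1
    simp only [apply_ite, abs_one, abs_zero, Finset.sum_ite_eq]
    split_ifs <;> norm_num
  | succ k ih =>
    rw [Finset.sum_congr rfl fun j _ => by
      rw [Wpow_succ_eq_sum (F := (hfin i).toFinset) fun l hl => by simpa using hl]]
    exact (sum_abs_sum_mul_le ih _ _ T).trans (hrow i _)

theorem sum_abs_Wpow_succ_sub_le {i : G} {F : Finset G} (hF : ∀ l ∉ F, W i l = 0)
    (s T : Finset G) (k : ℕ) :
    ∑ j ∈ T, |Wpow W (k + 1) i j - ∑ l ∈ s, W i l * Wpow W k l j| ≤ ∑ l ∈ F \ s, |W i l| := by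
  have hsplit : ∀ j, Wpow W (k + 1) i j - ∑ l ∈ s, W i l * Wpow W k l j
      = ∑ l ∈ F \ s, W i l * Wpow W k l j := fun j => by
    rw [Wpow_succ_eq_sum (F := F ∪ s) fun l hl => hF l fun h => hl (Finset.mem_union_left s h),
      ← Finset.sum_sdiff Finset.subset_union_right, Finset.union_sdiff_right, add_sub_cancel_right]
  simp only [hsplit]
  exact sum_abs_sum_mul_le (sum_abs_Wpow_le_one hfin hrow k) _ _ T

end Kernel

section EntrywiseL1

variable {m n p : Type*} [Fintype m] [Fintype n] [Fintype p]

def entrywiseL1 (M : Matrix m n ℝ) : ℝ := ∑ i, ∑ j, |M i j|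

theorem entrywiseL1_add_le (M N : Matrix m n ℝ) :
    entrywiseL1 (M + N) ≤ entrywiseL1 M + entrywiseL1 N := by
  simp only [entrywiseL1, ← Finset.sum_add_distrib]
  gcongr with i _ j _
  exact abs_add_le _ _

theorem entrywiseL1_mul_le {A : Matrix m n ℝ} (hA : ∀ l, ∑ i, |A i l| ≤ 1) (B : Matrix n p ℝ) :
    entrywiseL1 (A * B) ≤ entrywiseL1 B := by
  calc entrywiseL1 (A * B) ≤ ∑ i : m, ∑ j : p, ∑ l : n, |A i l| * |B l j| := by
        unfold entrywiseL1
        gcongr with i _ j _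
        exact (Finset.abs_sum_le_sum_abs _ _).trans_eq (by simp only [abs_mul])
    _ = ∑ l, (∑ i, |A i l|) * ∑ j, |B l j| := by
        simp_rw [Finset.sum_mul, Finset.mul_sum]
        conv_lhs => enter [2, i]; rw [Finset.sum_comm]
        exact Finset.sum_comm
    _ ≤ ∑ l, 1 * ∑ j, |B l j| := by
        gcongr with l _
        exact hA l
    _ = entrywiseL1 B := by simp [entrywiseL1]

theorem abs_trace_le_entrywiseL1 (M : Matrix n n ℝ) : |M.trace| ≤ entrywiseL1 M :=
  calc |M.trace| ≤ ∑ i, |M i i| := Finset.abs_sum_le_sum_abs _ _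
    _ ≤ entrywiseL1 M := Finset.sum_le_sum fun i _ =>
        Finset.single_le_sum (fun j _ => abs_nonneg (M i j)) (Finset.mem_univ i)

end EntrywiseL1

section Restriction

def restrictMatrix (K : G → G → ℝ) (s : Finset G) : Matrix s s ℝ :=
  Matrix.of fun i j => K i j

@[simp]
theorem restrictMatrix_apply (K : G → G → ℝ) (s : Finset G) (i j : s) :
    restrictMatrix K s i j = K i j :=
  rfl

theorem trace_restrictMatrix (K : G → G → ℝ) (s : Finset G) :
    (restrictMatrix K s).trace = ∑ i ∈ s, K i i :=
  Finset.sum_coe_sort s fun i => K i i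

theorem restrictMatrix_mul_apply (K L : G → G → ℝ) (s : Finset G) (i j : s) :
    (restrictMatrix K s * restrictMatrix L s) i j = ∑ l ∈ s, K i l * L l j :=
  Finset.sum_coe_sort s fun l => K i l * L l j

def boundaryFinset (W : G → G → ℝ) (s : Finset G) : Finset G :=
  s.filter fun i => ∃ j, j ∉ s ∧ W i j ≠ 0

theorem boundary_eq_card_boundaryFinset (W : G → G → ℝ) (s : Finset G) :
    boundary W s = (boundaryFinset W s).card := by
  rw [boundary, ← Set.ncard_coe_finset, boundaryFinset, Finset.coe_filter]

variable {W : G → G → ℝ} (hfin : ∀ i, (Function.support (W i)).Finite)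
  (hrow : ∀ i (T : Finset G), ∑ j ∈ T, |W i j| ≤ 1)
include hfin hrow

theorem entrywiseL1_restrictMatrix_Wpow_succ_sub_le (s : Finset G) (k : ℕ) :
    entrywiseL1 (restrictMatrix (Wpow W (k + 1)) s
      - restrictMatrix W s * restrictMatrix (Wpow W k) s) ≤ (boundaryFinset W s).card := by
  set leak : G → ℝ := fun i => ∑ l ∈ (hfin i).toFinset \ s, |W i l|
  have hrow_le : ∀ i : s, ∑ j : s, |(restrictMatrix (Wpow W (k + 1)) s
      - restrictMatrix W s * restrictMatrix (Wpow W k) s) i j| ≤ leak i := fun i => by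
    simp only [Matrix.sub_apply, restrictMatrix_mul_apply, restrictMatrix_apply]
    rw [Finset.sum_coe_sort s fun j => |Wpow W (k + 1) i j - ∑ l ∈ s, W i l * Wpow W k l j|]
    exact sum_abs_Wpow_succ_sub_le hfin hrow (fun l hl => by simpa using hl) s s k
  have hleak_zero : ∀ i ∈ s, i ∉ boundaryFinset W s → leak i = 0 := fun i hi hib =>
    Finset.sum_eq_zero fun l hl => by
      obtain ⟨hlW, hls⟩ := Finset.mem_sdiff.1 hl
      exact absurd (Finset.mem_filter.2 ⟨hi, l, hls, by simpa using hlW⟩) hib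
  calc _ ≤ ∑ i : s, leak i := Finset.sum_le_sum fun i _ => hrow_le i
    _ = ∑ i ∈ boundaryFinset W s, leak i := by
        rw [Finset.sum_coe_sort s leak]
        exact (Finset.sum_subset (Finset.filter_subset _ _) hleak_zero).symm
    _ ≤ ∑ i ∈ boundaryFinset W s, 1 := Finset.sum_le_sum fun i _ => hrow i _
    _ = (boundaryFinset W s).card := by simp

variable (hcol : ∀ j (T : Finset G), ∑ i ∈ T, |W i j| ≤ 1)
include hcol

theorem entrywiseL1_restrictMatrix_Wpow_sub_pow_le (s : Finset G) (k : ℕ) :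
    entrywiseL1 (restrictMatrix (Wpow W (k + 1)) s - restrictMatrix W s ^ (k + 1))
      ≤ (boundaryFinset W s).card * k := by
  set A := restrictMatrix W s
  have hA : ∀ l, ∑ i, |A i l| ≤ 1 := fun l =>
    (Finset.sum_coe_sort s fun i => |W i l|).trans_le (hcol l s)
  induction k with
  | zero => simp [Wpow_one, A, entrywiseL1]
  | succ k ih =>
    have hstep : restrictMatrix (Wpow W (k + 1 + 1)) s - A ^ (k + 1 + 1)
        = A * (restrictMatrix (Wpow W (k + 1)) s - A ^ (k + 1))
          + (restrictMatrix (Wpow W (k + 1 + 1)) s - A * restrictMatrix (Wpow W (k + 1)) s) := by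
      rw [pow_succ' A (k + 1)]
      noncomm_ring
    rw [hstep]
    calc _ ≤ _ := entrywiseL1_add_le _ _
      _ ≤ (boundaryFinset W s).card * k + (boundaryFinset W s).card :=
          add_le_add ((entrywiseL1_mul_le hA _).trans ih)
            (entrywiseL1_restrictMatrix_Wpow_succ_sub_le hfin hrow s (k + 1))
      _ = _ := by push_cast; ring

theorem abs_trace_restrictMatrix_pow_sub_le (s : Finset G) (k : ℕ) :
    |(restrictMatrix W s ^ k).trace - ∑ i ∈ s, Wpow W k i i|
      ≤ (boundaryFinset W s).card * (k - 1 : ℕ) := by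
  rw [← trace_restrictMatrix, ← abs_neg, neg_sub, ← Matrix.trace_sub]
  refine (abs_trace_le_entrywiseL1 _).trans ?_
  cases k with
  | zero =>
    have hone : restrictMatrix (Wpow W 0) s = 1 := by
      ext i j
      rw [restrictMatrix_apply, Matrix.one_apply]
      exact if_congr Subtype.ext_iff.symm rfl rfl
    simp [hone, entrywiseL1]
  | succ k => simpa using entrywiseL1_restrictMatrix_Wpow_sub_pow_le hfin hrow hcol s k

end Restriction

theorem tendsto_one_div_mul_of_abs_le {a δ m : ℕ → ℝ} (C : ℝ) (hm : ∀ n, 0 ≤ m n)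
    (ha : ∀ n, |a n| ≤ δ n * C) (hδ : Tendsto (fun n => δ n / m n) atTop (nhds 0)) :
    Tendsto (fun n => 1 / m n * a n) atTop (nhds 0) := by
  refine squeeze_zero_norm (fun n => ?_) (by simpa using hδ.mul_const C)
  rw [Real.norm_eq_abs, abs_mul, abs_of_nonneg (one_div_nonneg.2 (hm n))]
  calc _ ≤ 1 / m n * (δ n * C) := mul_le_mul_of_nonneg_left (ha n) (one_div_nonneg.2 (hm n))
    _ = δ n / m n * C := by ring

theorem stmt6_general {G : Type*} (W : G → G → ℝ) (D : ℕ)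
    (hker : KernelHyp W D) :
    (∀ (Gn : Finset G) (k : ℕ),
      |Matrix.trace ((Matrix.of fun i j : Gn => W (i : G) (j : G)) ^ k)
          - ∑ i ∈ Gn, Wpow W k i i|
        ≤ (boundary W Gn : ℝ) * ((k - 1 : ℕ) : ℝ) * 2 ^ (k - 1 : ℕ)) ∧
    (∀ GN : ℕ → Finset G,
      Tendsto (fun n => (boundary W (GN n) : ℝ) / ((GN n).card : ℝ)) atTop (nhds 0) →
      (∀ k : ℕ, Tendsto (fun n => (1 / ((GN n).card : ℝ)) *
          (Matrix.trace ((Matrix.of fun i j : (GN n) => W (i : G) (j : G)) ^ k)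
            - ∑ i ∈ GN n, Wpow W k i i)) atTop (nhds 0)) ∧
      (∀ μ : Measure ℝ,
        ((∀ k : ℕ, Tendsto (fun n => (1 / ((GN n).card : ℝ)) *
            Matrix.trace ((Matrix.of fun i j : (GN n) => W (i : G) (j : G)) ^ k))
          atTop (nhds (∫ x, x ^ k ∂μ))) ↔
        (∀ k : ℕ, Tendsto (fun n => (1 / ((GN n).card : ℝ)) * ∑ i ∈ GN n, Wpow W k i i)
          atTop (nhds (∫ x, x ^ k ∂μ)))))) := by
  have hrow := hker.sum_abs_le_one
  have hcol : ∀ j (T : Finset G), ∑ i ∈ T, |W i j| ≤ 1 := fun j T => by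
    simpa only [hker.1 _ j] using hrow j T
  have hbound : ∀ (Gn : Finset G) (k : ℕ),
      |Matrix.trace ((Matrix.of fun i j : Gn => W (i : G) (j : G)) ^ k)
          - ∑ i ∈ Gn, Wpow W k i i|
        ≤ (boundary W Gn : ℝ) * ((k - 1 : ℕ) : ℝ) * 2 ^ (k - 1 : ℕ) := fun Gn k => by
    rw [boundary_eq_card_boundaryFinset]
    exact (abs_trace_restrictMatrix_pow_sub_le hker.2.1 hrow hcol Gn k).trans
      (le_mul_of_one_le_right (by positivity) (one_le_pow₀ one_le_two))
  refine ⟨hbound, fun GN hδ => ?_⟩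
  have hdiff : ∀ k : ℕ, Tendsto (fun n => (1 / ((GN n).card : ℝ)) *
      (Matrix.trace ((Matrix.of fun i j : (GN n) => W (i : G) (j : G)) ^ k)
        - ∑ i ∈ GN n, Wpow W k i i)) atTop (nhds 0) := fun k =>
    tendsto_one_div_mul_of_abs_le _ (fun n => Nat.cast_nonneg _)
      (fun n => (hbound (GN n) k).trans_eq (mul_assoc _ _ _)) hδ
  refine ⟨hdiff, fun μ => ⟨fun hT k => ?_, fun hY k => ?_⟩⟩
  · simpa [mul_sub] using (hT k).sub (hdiff k)
  · simpa [mul_sub] using (hY k).add (hdiff k)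

/-- Comparison between `Tr((W_{G_n})^k)` and `Σ_{i∈G_n}(W^k)(i,i)`:
the difference is at most `δ_n·(k−1)·2^{k−1}`, hence along a sequence with `δ_n/m_n → 0`
the normalized difference tends to `0`, and the two moment conditions for weak
convergence of the empirical eigenvalue distribution are equivalent. -/
theorem stmt6 {G : Type*} [Countable G] (W : G → G → ℝ) (D : ℕ) (hD : 0 < D)
    (hker : KernelHyp W D) :
    (∀ (Gn : Finset G) (k : ℕ),
      |Matrix.trace ((Matrix.of fun i j : Gn => W (i : G) (j : G)) ^ k)
          - ∑ i ∈ Gn, Wpow W k i i|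
        ≤ (boundary W Gn : ℝ) * ((k - 1 : ℕ) : ℝ) * 2 ^ (k - 1 : ℕ)) ∧
    (∀ GN : ℕ → Finset G,
      Tendsto (fun n => (boundary W (GN n) : ℝ) / ((GN n).card : ℝ)) atTop (nhds 0) →
      (∀ k : ℕ, Tendsto (fun n => (1 / ((GN n).card : ℝ)) *
          (Matrix.trace ((Matrix.of fun i j : (GN n) => W (i : G) (j : G)) ^ k)
            - ∑ i ∈ GN n, Wpow W k i i)) atTop (nhds 0)) ∧
      (∀ μ : Measure ℝ,
        ((∀ k : ℕ, Tendsto (fun n => (1 / ((GN n).card : ℝ)) *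
            Matrix.trace ((Matrix.of fun i j : (GN n) => W (i : G) (j : G)) ^ k))
          atTop (nhds (∫ x, x ^ k ∂μ))) ↔
        (∀ k : ℕ, Tendsto (fun n => (1 / ((GN n).card : ℝ)) * ∑ i ∈ GN n, Wpow W k i i)
          atTop (nhds (∫ x, x ^ k ∂μ)))))) :=
  stmt6_general W D hker

end
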